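/- Let P, Q be binary-input DMCs with finite output alphabets whose conditional output distributions P_0, P_1 and Q_0, Q_1 each have a common support point, let p_min be the smallest nonzero transition probability among P and Q, and let s* ∈ [0,1/2] be a maximizer of E_s satisfying d_C(P_0,P_1,s*) ≥ d_C(P_0,P_1,1−s*) and d_C(Q_0,Q_1,s*) ≥ d_C(Q_0,Q_1,1−s*). Fix a deterministic n-step 2-hop protocol with decoding regions D_0, D_1, let w⃗_1(∅) ∈ {0,1}^n be a relay input string minimizing Q^n(D_0 | ·), and let w⃗_1^c(∅) be its bit-wise complement. If the functions s ↦ d_C(w⃗_1^c(∅), w⃗_1(∅), Q^n, s) and s ↦ d_C(Q_0,Q_1,s) are non-constant, concave with unique maximizers, and of weakly opposite type with respect to s*, then −log(p_{e,0} + p_{e,1}) ≤ n·d_C(Q_0,Q_1,s*) + √(2n)·log(1/p_min) + log 4. -/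

import Mathlib

open scoped BigOperators
open Finset

noncomputable section

/-- A probability mass function on a finite type, given as a real-valued function. -/
def IsPMF {α : Type*} [Fintype α] (p : α → ℝ) : Prop :=
  (∀ x, 0 ≤ p x) ∧ ∑ x, p x = 1

/-- A discrete memoryless channel: every input symbol yields a PMF on outputs. -/
def IsChannel {X Y : Type*} [Fintype Y] (P : X → Y → ℝ) : Prop :=
  ∀ x, IsPMF (P x)

/-- The Chernoff sum `Σ_x p(x)^{1-s} q(x)^s`, with terms where `p` or `q` vanish removed;
this realizes the continuous extension to the endpoints `s ∈ {0,1}`. -/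
def cherSum {α : Type*} [Fintype α] (p q : α → ℝ) (s : ℝ) : ℝ :=
  ∑ x, if p x = 0 ∨ q x = 0 then 0 else p x ^ (1 - s) * q x ^ s

/-- The Chernoff divergence `d_C(p, q, s)`. -/
def dC {α : Type*} [Fintype α] (p q : α → ℝ) (s : ℝ) : ℝ :=
  - Real.log (cherSum p q s)

/-- First derivative of the Chernoff divergence with respect to `s`. -/
def dC' {α : Type*} [Fintype α] (p q : α → ℝ) (s : ℝ) : ℝ :=
  deriv (dC p q) s

/-- Second derivative of the Chernoff divergence with respect to `s`. -/
def dC'' {α : Type*} [Fintype α] (p q : α → ℝ) (s : ℝ) : ℝ :=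
  deriv (deriv (dC p q)) s

/-- The tilted distribution `Q_s`. -/
def tilted {α : Type*} [Fintype α] (p q : α → ℝ) (s : ℝ) (x : α) : ℝ :=
  (if p x = 0 ∨ q x = 0 then 0 else p x ^ (1 - s) * q x ^ s) / cherSum p q s

/-- Kullback–Leibler divergence (natural log), with the convention `0 log 0 = 0`. -/
def KLdiv {α : Type*} [Fintype α] (p q : α → ℝ) : ℝ :=
  ∑ x, if p x = 0 then 0 else p x * Real.log (p x / q x)

/-- Product (memoryless) output distribution of a channel given an input string. -/
def prodDist {X Y : Type*} [Fintype Y] {n : ℕ} (P : X → Y → ℝ) (w : Fin n → X) :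
    (Fin n → Y) → ℝ :=
  fun y => ∏ i, P (w i) (y i)

/-- Two distributions have a common support point. -/
def CommonSupport {α : Type*} (p q : α → ℝ) : Prop :=
  ∃ x, p x ≠ 0 ∧ q x ≠ 0

/-- `pmin` is the smallest nonzero transition probability of the channel `Q`. -/
def MinTransChan {X Y : Type*} (Q : X → Y → ℝ) (pmin : ℝ) : Prop :=
  0 < pmin ∧ (∃ x y, Q x y = pmin) ∧ ∀ x y, Q x y ≠ 0 → pmin ≤ Q x y

/-- `pmin` is the smallest nonzero transition probability among the channels `P` and `Q`. -/
def MinTransPair {Y Z : Type*} (P : Bool → Y → ℝ) (Q : Bool → Z → ℝ) (pmin : ℝ) : Prop :=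
  0 < pmin ∧ ((∃ b y, P b y = pmin) ∨ (∃ b z, Q b z = pmin)) ∧
    (∀ b y, P b y ≠ 0 → pmin ≤ P b y) ∧ ∀ b z, Q b z ≠ 0 → pmin ≤ Q b z

/-- `pmin` is the smallest nonzero probability among the values of two distributions. -/
def MinProbPair {α : Type*} (p q : α → ℝ) (pmin : ℝ) : Prop :=
  0 < pmin ∧ ((∃ x, p x = pmin) ∨ (∃ x, q x = pmin)) ∧
    (∀ x, p x ≠ 0 → pmin ≤ p x) ∧ ∀ x, q x ≠ 0 → pmin ≤ q x

/-- A deterministic `n`-step 2-hop protocol: codewords `x false = x⃗₀`, `x true = x⃗₁`,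
relay maps (the `i`-th transmission may depend only on the previously received symbols),
and a decoder. -/
structure DetProtocol (Y Z : Type*) (n : ℕ) where
  x : Bool → Fin n → Bool
  relay : (i : Fin n) → (Fin i → Y) → Bool
  dec : (Fin n → Z) → Bool

/-- The relay transmissions `W_1, …, W_n` determined by the received sequence `y`. -/
def DetProtocol.W {Y Z : Type*} {n : ℕ} (π : DetProtocol Y Z n) (y : Fin n → Y)
    (i : Fin n) : Bool :=
  π.relay i (fun j => y (Fin.castLE i.isLt.le j))

/-- `errProb P Q π b` is the conditional error probability `ℙ(Θ̂ = ¬b ∣ Θ = b)`. -/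
def errProb {Y Z : Type*} [Fintype Y] [Fintype Z] {n : ℕ}
    (P : Bool → Y → ℝ) (Q : Bool → Z → ℝ) (π : DetProtocol Y Z n) (b : Bool) : ℝ :=
  ∑ y : Fin n → Y, ∑ z : Fin n → Z,
    prodDist P (π.x b) y * prodDist Q (π.W y) z *
      (if π.dec z = !b then 1 else 0)

/-- Probability (given `Θ = b`) that the relay receives the prefix `ypre` in the
first `k` time steps. -/
def prefixProb {Y Z : Type*} [Fintype Y] {n : ℕ} (P : Bool → Y → ℝ)
    (π : DetProtocol Y Z n) (b : Bool) {k : ℕ} (hk : k ≤ n) (ypre : Fin k → Y) : ℝ :=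
  ∏ i : Fin k, P (π.x b (Fin.castLE hk i)) (ypre i)

/-- `errGiven P Q π b hk ypre` is the conditional error probability `p_{e,b}(y_{1…k})`:
the probability that `Θ̂ = ¬b` given `Θ = b` and that the relay receives `ypre` in the
first `k` time steps. -/
def errGiven {Y Z : Type*} [Fintype Y] [Fintype Z] {n : ℕ}
    (P : Bool → Y → ℝ) (Q : Bool → Z → ℝ) (π : DetProtocol Y Z n) (b : Bool)
    {k : ℕ} (hk : k ≤ n) (ypre : Fin k → Y) : ℝ :=
  (∑ y : Fin n → Y, ∑ z : Fin n → Z,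
      Set.indicator {y' : Fin n → Y | ∀ i : Fin k, y' (Fin.castLE hk i) = ypre i}
          (fun _ => (1 : ℝ)) y *
        prodDist P (π.x b) y * prodDist Q (π.W y) z *
        (if π.dec z = !b then 1 else 0)) /
    prefixProb P π b hk ypre

/-- The first `k` relay transmissions `w⃗(y_{1…k})`, determined by the first `k`
received symbols. -/
def relayPrefix {Y Z : Type*} {n : ℕ} (π : DetProtocol Y Z n) {k : ℕ} (hk : k ≤ n)
    (ypre : Fin k → Y) (i : Fin k) : Bool :=
  π.relay (Fin.castLE hk i) (fun j => ypre (Fin.castLE i.isLt.le j))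

/-- Probability that the decoder outputs `b` when the relay input string is `w`. -/
def decProb {Z : Type*} [Fintype Z] {n : ℕ} (Q : Bool → Z → ℝ)
    (dec : (Fin n → Z) → Bool) (b : Bool) (w : Fin n → Bool) : ℝ :=
  ∑ z : Fin n → Z, prodDist Q w z * (if dec z = b then 1 else 0)

/-- `w` extends the relay's first `k` transmissions (after receiving `ypre`) to length `n`,
minimizing the probability that the decoder outputs `b`, i.e. `w = w⃗_{1-b}(y_{1…k})`. -/
def IsBestExtension {Y Z : Type*} [Fintype Z] {n : ℕ} (Q : Bool → Z → ℝ)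
    (π : DetProtocol Y Z n) (b : Bool) {k : ℕ} (hk : k ≤ n) (ypre : Fin k → Y)
    (w : Fin n → Bool) : Prop :=
  (∀ i : Fin k, w (Fin.castLE hk i) = relayPrefix π hk ypre i) ∧
    ∀ w' : Fin n → Bool,
      (∀ i : Fin k, w' (Fin.castLE hk i) = relayPrefix π hk ypre i) →
        decProb Q π.dec b w ≤ decProb Q π.dec b w'

/-- A randomized `n`-step 2-hop protocol: a finite collection of deterministic
protocols together with a probability distribution (the shared private randomness). -/
structure RandProtocol (Y Z : Type*) (n : ℕ) where
  m : ℕ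
  ρ : Fin m → ℝ
  det : Fin m → DetProtocol Y Z n

/-- Validity of the randomness distribution of a randomized protocol. -/
def RandProtocol.Valid {Y Z : Type*} {n : ℕ} (π : RandProtocol Y Z n) : Prop :=
  (∀ r, 0 ≤ π.ρ r) ∧ ∑ r, π.ρ r = 1

/-- Overall error probability `ℙ(Θ̂ ≠ Θ)` of a randomized protocol, with `Θ` uniform. -/
def randPe {Y Z : Type*} [Fintype Y] [Fintype Z] {n : ℕ}
    (P : Bool → Y → ℝ) (Q : Bool → Z → ℝ) (π : RandProtocol Y Z n) : ℝ :=
  ∑ r, π.ρ r * ((errProb P Q (π.det r) false + errProb P Q (π.det r) true) / 2)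

/-- The 2-hop error exponent `E(P,Q)`: the supremum, over sequences of (randomized)
protocols, of the liminf of `-(1/n) log P_e(n,P,Q)`. -/
def twoHopExponent {Y Z : Type*} [Fintype Y] [Fintype Z]
    (P : Bool → Y → ℝ) (Q : Bool → Z → ℝ) : ℝ :=
  sSup { E | ∃ π : (n : ℕ) → RandProtocol Y Z n, (∀ n, (π n).Valid) ∧
    E = Filter.liminf (fun n : ℕ => -(1 / (n : ℝ)) * Real.log (randPe P Q (π n)))
          Filter.atTop }

/-- `m` is the unique global maximizer of `g` on `[0,1]`. -/
def UniqueArgmax (g : ℝ → ℝ) (m : ℝ) : Prop :=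
  m ∈ Set.Icc (0 : ℝ) 1 ∧ ∀ s ∈ Set.Icc (0 : ℝ) 1, s ≠ m → g s < g m

/-- `g` is skewed with respect to `s*`. -/
def SkewedFun (sStar : ℝ) (g : ℝ → ℝ) : Prop :=
  ∃ m, UniqueArgmax g m ∧ (m < sStar ∨ 1 - sStar < m)

/-- `g` is balanced with respect to `s*`. -/
def BalancedFun (sStar : ℝ) (g : ℝ → ℝ) : Prop :=
  ∃ m, UniqueArgmax g m ∧ sStar < m ∧ m < 1 - sStar

/-- `g` is neutral with respect to `s*`. -/
def NeutralFun (sStar : ℝ) (g : ℝ → ℝ) : Prop :=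
  ∃ m, UniqueArgmax g m ∧ (m = sStar ∨ m = 1 - sStar)

/-- `g` and `h` are of strictly opposite type w.r.t. `s*`. -/
def StrictlyOppositeType (sStar : ℝ) (g h : ℝ → ℝ) : Prop :=
  (SkewedFun sStar g ∧ BalancedFun sStar h) ∨ (BalancedFun sStar g ∧ SkewedFun sStar h)

/-- `g` and `h` are of weakly opposite type w.r.t. `s*`. -/
def WeaklyOppositeType (sStar : ℝ) (g h : ℝ → ℝ) : Prop :=
  ((SkewedFun sStar g ∨ NeutralFun sStar g) ∧ (BalancedFun sStar h ∨ NeutralFun sStar h)) ∨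
    ((BalancedFun sStar g ∨ NeutralFun sStar g) ∧ (SkewedFun sStar h ∨ NeutralFun sStar h))

/-- `g` is non-constant on `[0,1]`. -/
def NonConstantOn (g : ℝ → ℝ) : Prop :=
  ∃ s₁ ∈ Set.Icc (0 : ℝ) 1, ∃ s₂ ∈ Set.Icc (0 : ℝ) 1, g s₁ ≠ g s₂

/-- The quantity `E_s` from the paper. -/
def Efun {Y Z : Type*} [Fintype Y] [Fintype Z]
    (P : Bool → Y → ℝ) (Q : Bool → Z → ℝ) (s : ℝ) : ℝ :=
  min (max (dC (P false) (P true) s) (dC (P false) (P true) (1 - s)))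
      (max (dC (Q false) (Q true) s) (dC (Q false) (Q true) (1 - s)))


/-!
Given `Θ = b` the decoder sees `Q^n(·|w⃗)` for some relay string `w⃗`, so `p_{e,0} + p_{e,1}` is at
least the overlap `∑_z min (Q^n(z|w⃗₀), Q^n(z|w⃗₁))`, where `w⃗₀` minimises `Q^n(D_1|·)`.
Tilting to `Q_s ∝ Q^n(·|w⃗₀)^{1-s} Q^n(·|w⃗₁)^s`, with `s` chosen by the intermediate value
theorem so that the tilted mean of the log-likelihood ratio has the right sign, Chebyshev's
inequality (the variance is at most `n log² (1/p_min)`) bounds the overlap below by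
`½ e^{-√(2n) log (1/p_min)} e^{-d_C(w⃗₀, w⃗₁, s)}`. Coordinatewise, the Chernoff coefficient can
only decrease when `w⃗₀` is replaced by the complement `w⃗₁ᶜ`, and
`d_C(w⃗₁ᶜ, w⃗₁, ·) = k h + (n - k) h(1 - ·)` for `h = d_C(Q_0, Q_1, ·)`. Since the two functions are
of weakly opposite type, `s*` or `1 - s*` lies between the maximiser of `h` and the maximiser of
`d_C(w⃗₁ᶜ, w⃗₁, ·)` (and its reflection); concavity of `h` then bounds that maximum by `n h(s*)`.
-/

def cherTerm (x y s : ℝ) : ℝ :=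
  if x = 0 ∨ y = 0 then 0 else x ^ (1 - s) * y ^ s

section cherTerm

variable {x y s : ℝ}

lemma cherTerm_of_pos (hx : 0 < x) (hy : 0 < y) : cherTerm x y s = x ^ (1 - s) * y ^ s :=
  if_neg (by simp [hx.ne', hy.ne'])

lemma cherTerm_pos (hx : 0 < x) (hy : 0 < y) : 0 < cherTerm x y s := by
  rw [cherTerm_of_pos hx hy]; positivity

lemma cherTerm_nonneg (hx : 0 ≤ x) (hy : 0 ≤ y) : 0 ≤ cherTerm x y s := by
  unfold cherTerm; split_ifs <;> positivity

lemma ne_zero_of_cherTerm_ne_zero (h : cherTerm x y s ≠ 0) : x ≠ 0 ∧ y ≠ 0 := by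
  unfold cherTerm at h; split_ifs at h with hxy
  · exact absurd rfl h
  · exact not_or.1 hxy

lemma cherTerm_comm (x y s : ℝ) : cherTerm x y s = cherTerm y x (1 - s) := by
  simp only [cherTerm, sub_sub_cancel, or_comm, mul_comm]

lemma cherTerm_self (hx : 0 ≤ x) (s : ℝ) : cherTerm x x s = x := by
  rcases hx.eq_or_lt with rfl | hx
  · simp [cherTerm]
  · rw [cherTerm_of_pos hx hx, ← Real.rpow_add hx, sub_add_cancel, Real.rpow_one]

lemma cherTerm_le (hx : 0 ≤ x) (hy : 0 ≤ y) (hs : s ∈ Set.Icc (0 : ℝ) 1) :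
    cherTerm x y s ≤ (1 - s) * x + s * y := by
  have hxy : 0 ≤ (1 - s) * x + s * y := by nlinarith [hs.1, hs.2]
  unfold cherTerm; split_ifs
  · exact hxy
  · exact Real.geom_mean_le_arith_mean2_weighted (by linarith [hs.2]) hs.1 hx hy (by ring)

lemma cherTerm_mul_exp (hx : 0 < x) (hy : 0 < y) :
    cherTerm x y s * Real.exp (s * (Real.log x - Real.log y)) = x ∧
      cherTerm x y s * Real.exp (-((1 - s) * (Real.log x - Real.log y))) = y := by
  rw [cherTerm_of_pos hx hy, Real.rpow_def_of_pos hx, Real.rpow_def_of_pos hy,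
    ← Real.exp_add, ← Real.exp_add, ← Real.exp_add]
  constructor
  · rw [show Real.log x * (1 - s) + Real.log y * s + s * (Real.log x - Real.log y) = Real.log x
      by ring, Real.exp_log hx]
  · rw [show Real.log x * (1 - s) + Real.log y * s + -((1 - s) * (Real.log x - Real.log y)) =
      Real.log y by ring, Real.exp_log hy]

lemma continuous_cherTerm (hx : 0 ≤ x) (hy : 0 ≤ y) : Continuous (cherTerm x y) := by
  rcases hx.eq_or_lt with rfl | hx
  · exact (continuous_const : Continuous fun _ : ℝ => (0 : ℝ)).congr fun s => by simp [cherTerm]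
  rcases hy.eq_or_lt with rfl | hy
  · exact (continuous_const : Continuous fun _ : ℝ => (0 : ℝ)).congr fun s => by simp [cherTerm]
  simp only [funext fun s => cherTerm_of_pos (s := s) hx hy, Real.rpow_def_of_pos hx,
    Real.rpow_def_of_pos hy]
  fun_prop

lemma cherTerm_prod {ι : Type*} (t : Finset ι) {a b : ι → ℝ} (ha : ∀ i, 0 ≤ a i)
    (hb : ∀ i, 0 ≤ b i) (s : ℝ) :
    cherTerm (∏ i ∈ t, a i) (∏ i ∈ t, b i) s = ∏ i ∈ t, cherTerm (a i) (b i) s := by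
  by_cases hz : ∃ i ∈ t, a i = 0 ∨ b i = 0
  · obtain ⟨i, hi, hab⟩ := hz
    rw [Finset.prod_eq_zero (f := fun i => cherTerm (a i) (b i) s) hi (if_pos hab)]
    exact if_pos (hab.imp (Finset.prod_eq_zero hi) (Finset.prod_eq_zero hi))
  · push Not at hz
    have hpos : ∀ i ∈ t, 0 < a i ∧ 0 < b i := fun i hi =>
      ⟨(ha i).lt_of_ne (hz i hi).1.symm, (hb i).lt_of_ne (hz i hi).2.symm⟩
    rw [cherTerm_of_pos (Finset.prod_pos fun i hi => (hpos i hi).1)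
      (Finset.prod_pos fun i hi => (hpos i hi).2), ← Real.finsetProd_rpow _ _ (fun i _ => ha i),
      ← Real.finsetProd_rpow _ _ (fun i _ => hb i), ← Finset.prod_mul_distrib]
    exact Finset.prod_congr rfl fun i hi => (cherTerm_of_pos (hpos i hi).1 (hpos i hi).2).symm

end cherTerm

section cherSum

variable {α : Type*} [Fintype α] {p q : α → ℝ} {s : ℝ}

lemma cherSum_eq_sum_cherTerm (p q : α → ℝ) (s : ℝ) :
    cherSum p q s = ∑ x, cherTerm (p x) (q x) s := rfl

lemma tilted_eq (p q : α → ℝ) (s : ℝ) (x : α) :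
    tilted p q s x = cherTerm (p x) (q x) s / cherSum p q s := rfl

lemma cherSum_pos (hp : ∀ x, 0 ≤ p x) (hq : ∀ x, 0 ≤ q x) (h : CommonSupport p q) (s : ℝ) :
    0 < cherSum p q s := by
  obtain ⟨x, hpx, hqx⟩ := h
  exact Finset.sum_pos' (fun y _ => cherTerm_nonneg (hp y) (hq y))
    ⟨x, mem_univ x, cherTerm_pos ((hp x).lt_of_ne hpx.symm) ((hq x).lt_of_ne hqx.symm)⟩

lemma cherSum_nonneg (hp : ∀ x, 0 ≤ p x) (hq : ∀ x, 0 ≤ q x) (s : ℝ) : 0 ≤ cherSum p q s :=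
  Finset.sum_nonneg fun x _ => cherTerm_nonneg (hp x) (hq x)

lemma cherSum_le_one (hp : IsPMF p) (hq : IsPMF q) (hs : s ∈ Set.Icc (0 : ℝ) 1) :
    cherSum p q s ≤ 1 :=
  calc cherSum p q s ≤ ∑ x, ((1 - s) * p x + s * q x) :=
        Finset.sum_le_sum fun x _ => cherTerm_le (hp.1 x) (hq.1 x) hs
    _ = 1 := by
        rw [Finset.sum_add_distrib, ← Finset.mul_sum, ← Finset.mul_sum, hp.2, hq.2]; ring

lemma cherSum_self (hp : IsPMF p) (s : ℝ) : cherSum p p s = 1 := by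
  simp only [cherSum_eq_sum_cherTerm, cherTerm_self (hp.1 _), hp.2]

lemma cherSum_comm (p q : α → ℝ) (s : ℝ) : cherSum p q s = cherSum q p (1 - s) := by
  simp only [cherSum_eq_sum_cherTerm, cherTerm_comm (p _)]

lemma continuous_cherSum (hp : ∀ x, 0 ≤ p x) (hq : ∀ x, 0 ≤ q x) :
    Continuous (cherSum p q) :=
  continuous_finsetSum _ fun x _ => continuous_cherTerm (hp x) (hq x)

lemma tilted_nonneg (hp : ∀ x, 0 ≤ p x) (hq : ∀ x, 0 ≤ q x) (s : ℝ) (x : α) :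
    0 ≤ tilted p q s x :=
  div_nonneg (cherTerm_nonneg (hp x) (hq x)) (cherSum_nonneg hp hq s)

lemma sum_tilted (hp : ∀ x, 0 ≤ p x) (hq : ∀ x, 0 ≤ q x) (h : CommonSupport p q) (s : ℝ) :
    ∑ x, tilted p q s x = 1 := by
  simp only [tilted_eq, ← Finset.sum_div, ← cherSum_eq_sum_cherTerm]
  exact div_self (cherSum_pos hp hq h s).ne'

lemma continuous_tilted (hp : ∀ x, 0 ≤ p x) (hq : ∀ x, 0 ≤ q x) (h : CommonSupport p q)
    (x : α) : Continuous fun s => tilted p q s x :=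
  (continuous_cherTerm (hp x) (hq x)).div (continuous_cherSum hp hq)
    fun s => (cherSum_pos hp hq h s).ne'

lemma ne_zero_of_tilted_ne_zero {x : α} (h : tilted p q s x ≠ 0) : p x ≠ 0 ∧ q x ≠ 0 :=
  ne_zero_of_cherTerm_ne_zero (left_ne_zero_of_mul h)

lemma dC_comm (p q : α → ℝ) (s : ℝ) : dC p q s = dC q p (1 - s) := by
  rw [dC, dC, cherSum_comm]

lemma dC_le_iff (h : 0 < cherSum p q s) {c : ℝ} :
    dC p q s ≤ c ↔ Real.exp (-c) ≤ cherSum p q s := by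
  rw [dC, neg_le, Real.le_log_iff_exp_le h]

end cherSum

section pi

variable {ι β : Type*} [Fintype ι] [DecidableEq ι] [Fintype β] {a b : ι → β → ℝ}

lemma cherSum_pi (ha : ∀ i ζ, 0 ≤ a i ζ) (hb : ∀ i ζ, 0 ≤ b i ζ) (s : ℝ) :
    cherSum (fun z : ι → β => ∏ i, a i (z i)) (fun z => ∏ i, b i (z i)) s =
      ∏ i, cherSum (a i) (b i) s := by
  simp only [cherSum_eq_sum_cherTerm, Fintype.prod_sum]
  exact Finset.sum_congr rfl fun z _ =>
    cherTerm_prod _ (fun i => ha i (z i)) (fun i => hb i (z i)) s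

lemma tilted_pi (ha : ∀ i ζ, 0 ≤ a i ζ) (hb : ∀ i ζ, 0 ≤ b i ζ) (s : ℝ) (z : ι → β) :
    tilted (fun z : ι → β => ∏ i, a i (z i)) (fun z => ∏ i, b i (z i)) s z =
      ∏ i, tilted (a i) (b i) s (z i) := by
  simp only [tilted_eq, cherSum_pi ha hb, Finset.prod_div_distrib]
  rw [cherTerm_prod _ (fun i => ha i (z i)) (fun i => hb i (z i))]

lemma dC_pi (ha : ∀ i ζ, 0 ≤ a i ζ) (hb : ∀ i ζ, 0 ≤ b i ζ)
    (hab : ∀ i, CommonSupport (a i) (b i)) (s : ℝ) :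
    dC (fun z : ι → β => ∏ i, a i (z i)) (fun z => ∏ i, b i (z i)) s = ∑ i, dC (a i) (b i) s := by
  simp only [dC, cherSum_pi ha hb,
    Real.log_prod fun i _ => (cherSum_pos (ha i) (hb i) (hab i) s).ne', Finset.sum_neg_distrib]

end pi

section expectation

variable {ι β : Type*} [Fintype ι] [DecidableEq ι] [Fintype β]

lemma sum_pi_mul_prod (μ g : ι → β → ℝ) :
    ∑ z : ι → β, (∏ i, μ i (z i)) * ∏ i, g i (z i) = ∏ i, ∑ ζ, μ i ζ * g i ζ := by
  simp only [← Finset.prod_mul_distrib, Fintype.prod_sum]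

variable {μ : ι → β → ℝ}

lemma sum_pi_mul_apply (hμ : ∀ i, ∑ ζ, μ i ζ = 1) (i : ι) (u : β → ℝ) :
    ∑ z : ι → β, (∏ k, μ k (z k)) * u (z i) = ∑ ζ, μ i ζ * u ζ := by
  have h := sum_pi_mul_prod μ (fun k => if k = i then u else 1)
  simp only [ite_apply, Pi.one_apply, Finset.prod_ite_eq', mem_univ, if_true] at h
  rw [h, Fintype.prod_eq_single i fun k hk => by simp [hk, hμ k]]
  simp

lemma sum_pi_mul_apply_mul_apply (hμ : ∀ i, ∑ ζ, μ i ζ = 1) {i j : ι} (hij : i ≠ j)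
    (u v : β → ℝ) :
    ∑ z : ι → β, (∏ k, μ k (z k)) * (u (z i) * v (z j)) =
      (∑ ζ, μ i ζ * u ζ) * ∑ ζ, μ j ζ * v ζ := by
  set g : ι → β → ℝ := fun k => if k = i then u else if k = j then v else 1
  calc ∑ z : ι → β, (∏ k, μ k (z k)) * (u (z i) * v (z j))
      = ∑ z : ι → β, (∏ k, μ k (z k)) * ∏ k, g k (z k) :=
        Finset.sum_congr rfl fun z _ => by
          rw [Fintype.prod_eq_mul (f := fun k => g k (z k)) i j hij
            fun k hk => by simp [g, hk.1, hk.2]]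
          simp [g, hij.symm]
    _ = ∏ k, ∑ ζ, μ k ζ * g k ζ := sum_pi_mul_prod μ g
    _ = (∑ ζ, μ i ζ * u ζ) * ∑ ζ, μ j ζ * v ζ := by
        rw [Fintype.prod_eq_mul i j hij fun k hk => by simp [g, hk.1, hk.2, hμ k]]
        simp [g, hij.symm]

lemma sum_pi_mul_sum (hμ : ∀ i, ∑ ζ, μ i ζ = 1) (X : ι → β → ℝ) :
    ∑ z : ι → β, (∏ k, μ k (z k)) * ∑ i, X i (z i) = ∑ i, ∑ ζ, μ i ζ * X i ζ := by
  simp only [Finset.mul_sum]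
  rw [Finset.sum_comm]
  exact Finset.sum_congr rfl fun i _ => sum_pi_mul_apply hμ i (X i)

lemma sum_pi_mul_sum_sq (hμ : ∀ i, ∑ ζ, μ i ζ = 1) (X : ι → β → ℝ)
    (hX : ∀ i, ∑ ζ, μ i ζ * X i ζ = 0) :
    ∑ z : ι → β, (∏ k, μ k (z k)) * (∑ i, X i (z i)) ^ 2 = ∑ i, ∑ ζ, μ i ζ * X i ζ ^ 2 :=
  calc ∑ z : ι → β, (∏ k, μ k (z k)) * (∑ i, X i (z i)) ^ 2
      = ∑ i, ∑ j, ∑ z : ι → β, (∏ k, μ k (z k)) * (X i (z i) * X j (z j)) := by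
        simp_rw [sq, Finset.sum_mul_sum, Finset.mul_sum]
        rw [Finset.sum_comm]
        exact Finset.sum_congr rfl fun i _ => Finset.sum_comm
    _ = ∑ i, ∑ z : ι → β, (∏ k, μ k (z k)) * (X i (z i) * X i (z i)) :=
        Finset.sum_congr rfl fun i _ => Finset.sum_eq_single i
          (fun j _ hji => by rw [sum_pi_mul_apply_mul_apply hμ hji.symm, hX, zero_mul])
          (fun h => absurd (mem_univ i) h)
    _ = ∑ i, ∑ ζ, μ i ζ * X i ζ ^ 2 := by
        simp only [← sq]
        exact Finset.sum_congr rfl fun i _ => sum_pi_mul_apply hμ i fun ζ => X i ζ ^ 2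

end expectation

section tilt

variable {α : Type*} [Fintype α]

lemma sum_mul_sub_sq_le {μ ℓ : α → ℝ} (hμ : ∑ x, μ x = 1) :
    ∑ x, μ x * (ℓ x - ∑ y, μ y * ℓ y) ^ 2 ≤ ∑ x, μ x * ℓ x ^ 2 := by
  set m := ∑ y, μ y * ℓ y
  calc ∑ x, μ x * (ℓ x - m) ^ 2 = ∑ x, (μ x * ℓ x ^ 2 - 2 * m * (μ x * ℓ x) + m ^ 2 * μ x) :=
        Finset.sum_congr rfl fun x _ => by ring
    _ = ∑ x, μ x * ℓ x ^ 2 - m ^ 2 := by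
        rw [Finset.sum_add_distrib, Finset.sum_sub_distrib, ← Finset.mul_sum, ← Finset.mul_sum,
          hμ]
        ring
    _ ≤ ∑ x, μ x * ℓ x ^ 2 := sub_le_self _ (sq_nonneg m)

/-- Chebyshev's inequality. -/
lemma sum_le_two_mul_sum_filter_abs_le {w f : α → ℝ} (hw : ∀ x, 0 ≤ w x) {δ : ℝ} (hδ : 0 ≤ δ)
    (h : 2 * ∑ x, w x * f x ^ 2 ≤ δ ^ 2 * ∑ x, w x) :
    ∑ x, w x ≤ 2 * ∑ x with |f x| ≤ δ, w x := by
  have hsplit := Finset.sum_filter_add_sum_filter_not univ (fun x => |f x| ≤ δ) w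
  have hgood : 0 ≤ ∑ x with |f x| ≤ δ, w x := Finset.sum_nonneg fun x _ => hw x
  have hmom : ∀ x ∈ univ, 0 ≤ w x * f x ^ 2 := fun x _ => mul_nonneg (hw x) (sq_nonneg _)
  have hbad : δ ^ 2 * ∑ x with ¬|f x| ≤ δ, w x ≤ ∑ x, w x * f x ^ 2 := by
    rw [Finset.mul_sum]
    refine (Finset.sum_le_sum fun x hx => ?_).trans
      (Finset.sum_le_sum_of_subset_of_nonneg (Finset.filter_subset _ _) fun x _ _ => hmom x (mem_univ x))
    have hfx : δ ^ 2 ≤ f x ^ 2 := by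
      rw [← sq_abs (f x)]; exact pow_le_pow_left₀ hδ (not_le.1 (Finset.mem_filter.1 hx).2).le 2
    nlinarith [hw x]
  rcases hδ.eq_or_lt with rfl | hδ
  · have hzero := (Finset.sum_eq_zero_iff_of_nonneg hmom).1
      (le_antisymm (by linarith) (Finset.sum_nonneg hmom))
    have hbad0 : ∑ x with ¬|f x| ≤ 0, w x = 0 := Finset.sum_eq_zero fun x hx => by
      have hfx : f x ≠ 0 := fun h0 => (Finset.mem_filter.1 hx).2 (by simp [h0])
      simpa [hfx] using hzero x (mem_univ x)
    linarith
  · have : δ ^ 2 * ∑ x with ¬|f x| ≤ δ, w x ≤ δ ^ 2 * ∑ x with |f x| ≤ δ, w x := by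
      nlinarith
    linarith [le_of_mul_le_mul_left this (by positivity)]

lemma exists_mem_Icc_mul_nonneg_and_one_sub_mul_nonpos {f : ℝ → ℝ}
    (hf : ContinuousOn f (Set.Icc 0 1)) :
    ∃ s ∈ Set.Icc (0 : ℝ) 1, 0 ≤ s * f s ∧ (1 - s) * f s ≤ 0 := by
  by_cases h0 : f 0 ≤ 0
  · exact ⟨0, Set.left_mem_Icc.2 zero_le_one, by simp, by simpa using h0⟩
  by_cases h1 : 0 ≤ f 1
  · exact ⟨1, Set.right_mem_Icc.2 zero_le_one, by simpa using h1, by simp⟩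
  obtain ⟨s, hs, hfs⟩ := intermediate_value_Icc' zero_le_one hf
    ⟨(not_le.1 h1).le, (not_le.1 h0).le⟩
  exact ⟨s, hs, by simp [hfs], by simp [hfs]⟩


lemma exp_neg_mul_cherTerm_le_min {x y s m δ ℓ : ℝ} (hx : 0 ≤ x) (hy : 0 ≤ y)
    (hℓ : x ≠ 0 → y ≠ 0 → ℓ = Real.log x - Real.log y) (hs : s ∈ Set.Icc (0 : ℝ) 1)
    (hsm : 0 ≤ s * m) (hsm' : (1 - s) * m ≤ 0) (hδ : |ℓ - m| ≤ δ) :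
    Real.exp (-δ) * cherTerm x y s ≤ min x y := by
  rcases hx.eq_or_lt with rfl | hx
  · simp [cherTerm, hy]
  rcases hy.eq_or_lt with rfl | hy
  · simp [cherTerm, hx.le]
  obtain ⟨hxexp, hyexp⟩ := cherTerm_mul_exp (s := s) hx hy
  rw [← hℓ hx.ne' hy.ne'] at hxexp hyexp
  obtain ⟨hδ₁, hδ₂⟩ := abs_le.1 hδ
  have hc := (cherTerm_pos (s := s) hx hy).le
  refine le_min ?_ ?_
  · calc Real.exp (-δ) * cherTerm x y s ≤ cherTerm x y s * Real.exp (s * ℓ) := by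
          rw [mul_comm]; gcongr; nlinarith [hs.1, hs.2]
      _ = x := hxexp
  · calc Real.exp (-δ) * cherTerm x y s ≤ cherTerm x y s * Real.exp (-((1 - s) * ℓ)) := by
          rw [mul_comm]; gcongr; nlinarith [hs.1, hs.2]
      _ = y := hyexp

variable {p q L : α → ℝ}

/-- Where the log-likelihood ratio `L` stays within `δ` of `m`, both `p` and `q` dominate
`e^{-δ}` times the tilted mass; Chebyshev puts half of the tilted mass there. -/
lemma half_mul_exp_neg_mul_cherSum_le_sum_min (hp : ∀ x, 0 ≤ p x) (hq : ∀ x, 0 ≤ q x)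
    (hpq : CommonSupport p q)
    (hL : ∀ x, p x ≠ 0 → q x ≠ 0 → L x = Real.log (p x) - Real.log (q x))
    {s m δ : ℝ} (hs : s ∈ Set.Icc (0 : ℝ) 1) (hsm : 0 ≤ s * m) (hsm' : (1 - s) * m ≤ 0)
    (hδ : 0 ≤ δ) (hvar : 2 * ∑ x, tilted p q s x * (L x - m) ^ 2 ≤ δ ^ 2) :
    1 / 2 * Real.exp (-δ) * cherSum p q s ≤ ∑ x, min (p x) (q x) := by
  have hC := cherSum_pos hp hq hpq s
  have hT := sum_tilted hp hq hpq s
  have hhalf : 1 ≤ 2 * ∑ x with |L x - m| ≤ δ, tilted p q s x := by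
    simpa only [hT] using sum_le_two_mul_sum_filter_abs_le (tilted_nonneg hp hq s) hδ
      (by rwa [hT, mul_one])
  have hpt : ∀ x, |L x - m| ≤ δ →
      Real.exp (-δ) * cherSum p q s * tilted p q s x ≤ min (p x) (q x) := fun x hx => by
    rw [tilted_eq, mul_assoc, mul_div_cancel₀ _ hC.ne']
    exact exp_neg_mul_cherTerm_le_min (hp x) (hq x) (hL x) hs hsm hsm' hx
  calc 1 / 2 * Real.exp (-δ) * cherSum p q s
      ≤ Real.exp (-δ) * cherSum p q s * ∑ x with |L x - m| ≤ δ, tilted p q s x := by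
        nlinarith [mul_le_mul_of_nonneg_left hhalf (by positivity :
          0 ≤ Real.exp (-δ) * cherSum p q s)]
    _ ≤ ∑ x with |L x - m| ≤ δ, min (p x) (q x) := by
        rw [Finset.mul_sum]
        exact Finset.sum_le_sum fun x hx => hpt x (Finset.mem_filter.1 hx).2
    _ ≤ ∑ x, min (p x) (q x) :=
        Finset.sum_le_sum_of_subset_of_nonneg (Finset.filter_subset _ _)
          fun x _ _ => le_min (hp x) (hq x)

end tilt

section piTilt

variable {ι β : Type*} [Fintype ι] [DecidableEq ι] [Fintype β] {a b : ι → β → ℝ}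

lemma sum_tilted_pi_mul_sub_sq_le (ha : ∀ i ζ, 0 ≤ a i ζ) (hb : ∀ i ζ, 0 ≤ b i ζ)
    (hab : ∀ i, CommonSupport (a i) (b i)) {K : ℝ}
    (hK : ∀ i ζ, a i ζ ≠ 0 → b i ζ ≠ 0 → |Real.log (a i ζ) - Real.log (b i ζ)| ≤ K) (s : ℝ) :
    ∑ z : ι → β, tilted (fun z : ι → β => ∏ i, a i (z i)) (fun z => ∏ i, b i (z i)) s z *
        (∑ i, (Real.log (a i (z i)) - Real.log (b i (z i))) -
          ∑ i, ∑ ζ, tilted (a i) (b i) s ζ * (Real.log (a i ζ) - Real.log (b i ζ))) ^ 2 ≤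
      Fintype.card ι * K ^ 2 := by
  set τ : ι → β → ℝ := fun i => tilted (a i) (b i) s
  set ℓ : ι → β → ℝ := fun i ζ => Real.log (a i ζ) - Real.log (b i ζ)
  set m : ι → ℝ := fun i => ∑ ζ, τ i ζ * ℓ i ζ
  have hτ : ∀ i, ∑ ζ, τ i ζ = 1 := fun i => sum_tilted (ha i) (hb i) (hab i) s
  have hcentred : ∀ i, ∑ ζ, τ i ζ * (ℓ i ζ - m i) = 0 := fun i => by
    simp only [mul_sub, Finset.sum_sub_distrib, ← Finset.sum_mul, hτ, one_mul]
    exact sub_self _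
  have hsecond : ∀ i, ∑ ζ, τ i ζ * ℓ i ζ ^ 2 ≤ K ^ 2 := fun i => by
    calc ∑ ζ, τ i ζ * ℓ i ζ ^ 2 ≤ ∑ ζ, τ i ζ * K ^ 2 := Finset.sum_le_sum fun ζ _ => by
          by_cases h : τ i ζ = 0
          · simp [h]
          obtain ⟨hai, hbi⟩ := ne_zero_of_tilted_ne_zero h
          have hℓ : ℓ i ζ ^ 2 ≤ K ^ 2 := by
            rw [← sq_abs]; exact pow_le_pow_left₀ (abs_nonneg _) (hK i ζ hai hbi) 2
          exact mul_le_mul_of_nonneg_left hℓ (tilted_nonneg (ha i) (hb i) s ζ)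
      _ = K ^ 2 := by rw [← Finset.sum_mul, hτ, one_mul]
  calc ∑ z : ι → β, tilted (fun z : ι → β => ∏ i, a i (z i)) (fun z => ∏ i, b i (z i)) s z *
        (∑ i, ℓ i (z i) - ∑ i, m i) ^ 2
      = ∑ z : ι → β, (∏ i, τ i (z i)) * (∑ i, (ℓ i (z i) - m i)) ^ 2 := by
        simp only [tilted_pi ha hb, ← Finset.sum_sub_distrib, τ]
    _ = ∑ i, ∑ ζ, τ i ζ * (ℓ i ζ - m i) ^ 2 := sum_pi_mul_sum_sq hτ _ hcentred
    _ ≤ ∑ _i : ι, K ^ 2 := Finset.sum_le_sum fun i _ =>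
        (sum_mul_sub_sq_le (hτ i)).trans (hsecond i)
    _ = Fintype.card ι * K ^ 2 := by simp

/-- The Shannon–Gallager–Berlekamp lower bound on the overlap of two product distributions. -/
theorem exists_half_mul_exp_neg_mul_cherSum_pi_le_sum_min (ha : ∀ i ζ, 0 ≤ a i ζ)
    (hb : ∀ i ζ, 0 ≤ b i ζ) (hab : ∀ i, CommonSupport (a i) (b i)) {K : ℝ} (hK0 : 0 ≤ K)
    (hK : ∀ i ζ, a i ζ ≠ 0 → b i ζ ≠ 0 → |Real.log (a i ζ) - Real.log (b i ζ)| ≤ K) :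
    ∃ s ∈ Set.Icc (0 : ℝ) 1,
      1 / 2 * Real.exp (-(Real.sqrt (2 * Fintype.card ι) * K)) *
          cherSum (fun z : ι → β => ∏ i, a i (z i)) (fun z => ∏ i, b i (z i)) s ≤
        ∑ z : ι → β, min (∏ i, a i (z i)) (∏ i, b i (z i)) := by
  set m : ℝ → ℝ := fun s =>
    ∑ i, ∑ ζ, tilted (a i) (b i) s ζ * (Real.log (a i ζ) - Real.log (b i ζ))
  have hm : Continuous m := continuous_finsetSum _ fun i _ => continuous_finsetSum _
    fun ζ _ => (continuous_tilted (ha i) (hb i) (hab i) ζ).mul continuous_const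
  obtain ⟨s, hs, hsm, hsm'⟩ := exists_mem_Icc_mul_nonneg_and_one_sub_mul_nonpos hm.continuousOn
  choose ζ hζa hζb using hab
  refine ⟨s, hs, half_mul_exp_neg_mul_cherSum_le_sum_min
    (fun z => Finset.prod_nonneg fun i _ => ha i (z i))
    (fun z => Finset.prod_nonneg fun i _ => hb i (z i))
    ⟨ζ, Finset.prod_ne_zero_iff.2 fun i _ => hζa i, Finset.prod_ne_zero_iff.2 fun i _ => hζb i⟩
    (L := fun z => ∑ i, (Real.log (a i (z i)) - Real.log (b i (z i)))) (fun z hz hz' => ?_)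
    hs hsm hsm' (by positivity) ?_⟩
  · rw [Real.log_prod fun i _ => Finset.prod_ne_zero_iff.1 hz i (mem_univ i),
      Real.log_prod fun i _ => Finset.prod_ne_zero_iff.1 hz' i (mem_univ i),
      Finset.sum_sub_distrib]
  · rw [mul_pow, Real.sq_sqrt (by positivity)]
    have hvar := sum_tilted_pi_mul_sub_sq_le ha hb (fun i => ⟨ζ i, hζa i, hζb i⟩) hK s
    linarith

end piTilt

section type

lemma ConcaveOn.le_of_isMaxOn_of_mem_segment {𝕜 E β : Type*} [Semiring 𝕜] [PartialOrder 𝕜]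
    [AddCommMonoid E] [AddCommMonoid β] [LinearOrder β] [IsOrderedAddMonoid β] [SMul 𝕜 E]
    [Module 𝕜 β] [PosSMulStrictMono 𝕜 β] {s : Set E} {f : E → β} (hf : ConcaveOn 𝕜 s f)
    {x m y : E} (hx : x ∈ s) (hm : m ∈ s) (hmax : IsMaxOn f s m) (hy : y ∈ segment 𝕜 x m) :
    f x ≤ f y := by
  simpa only [min_eq_left (hmax hx)] using hf.ge_on_segment hx hm hy

lemma UniqueArgmax.isMaxOn {g : ℝ → ℝ} {m : ℝ} (hm : UniqueArgmax g m) :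
    IsMaxOn g (Set.Icc 0 1) m := isMaxOn_iff.2 fun s hs => by
  rcases eq_or_ne s m with rfl | hne
  · exact le_rfl
  · exact (hm.2 s hs hne).le

lemma mem_uIcc_of_weaklySkewed_of_weaklyBalanced {σ u v : ℝ} (hu : u ≤ σ ∨ 1 - σ ≤ u)
    (hv : σ ≤ v ∧ v ≤ 1 - σ) : σ ∈ Set.uIcc u v ∨ 1 - σ ∈ Set.uIcc u v := by
  rcases hu with hu | hu
  · exact Or.inl (Set.mem_uIcc.2 (Or.inl ⟨hu, hv.1⟩))
  · exact Or.inr (Set.mem_uIcc.2 (Or.inr ⟨hv.2, hu⟩))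

variable {g h : ℝ → ℝ} {σ : ℝ}

lemma ConcaveOn.le_of_mem_uIcc_argmax (hh : ConcaveOn ℝ (Set.Icc 0 1) h) {mh : ℝ}
    (hmh : UniqueArgmax h mh) (hord : h (1 - σ) ≤ h σ)
    {u : ℝ} (hu : u ∈ Set.Icc (0 : ℝ) 1) (hloc : σ ∈ Set.uIcc u mh ∨ 1 - σ ∈ Set.uIcc u mh) :
    h u ≤ h σ := by
  have key := fun (t : ℝ) (ht : t ∈ Set.uIcc u mh) =>
    hh.le_of_isMaxOn_of_mem_segment hu hmh.1 hmh.isMaxOn (by rwa [segment_eq_uIcc])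
  rcases hloc with hloc | hloc
  · exact key σ hloc
  · exact (key _ hloc).trans hord

lemma WeaklyOppositeType.exists_uniqueArgmax_le (hopp : WeaklyOppositeType σ g h)
    (hh : ConcaveOn ℝ (Set.Icc 0 1) h) (hσ : σ ∈ Set.Icc (0 : ℝ) (1 / 2))
    (hord : h (1 - σ) ≤ h σ) :
    ∃ mg, UniqueArgmax g mg ∧ h mg ≤ h σ ∧ h (1 - mg) ≤ h σ := by
  have skewed : ∀ f, SkewedFun σ f ∨ NeutralFun σ f →
      ∃ m, UniqueArgmax f m ∧ (m ≤ σ ∨ 1 - σ ≤ m) := by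
    rintro f (⟨m, hm, hloc⟩ | ⟨m, hm, hloc⟩)
    · exact ⟨m, hm, hloc.imp le_of_lt le_of_lt⟩
    · exact ⟨m, hm, hloc.imp le_of_eq ge_of_eq⟩
  have balanced : ∀ f, BalancedFun σ f ∨ NeutralFun σ f →
      ∃ m, UniqueArgmax f m ∧ σ ≤ m ∧ m ≤ 1 - σ := by
    rintro f (⟨m, hm, hloc₁, hloc₂⟩ | ⟨m, hm, rfl | rfl⟩)
    · exact ⟨m, hm, hloc₁.le, hloc₂.le⟩
    all_goals exact ⟨_, hm, by linarith [hσ.2], by linarith [hσ.2]⟩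
  have hflip : ∀ u : ℝ, (u ≤ σ ∨ 1 - σ ≤ u) → (1 - u ≤ σ ∨ 1 - σ ≤ 1 - u) := fun u hu =>
    hu.symm.imp (fun _ => by linarith) (fun _ => by linarith)
  have hcompl : ∀ {u : ℝ}, u ∈ Set.Icc (0 : ℝ) 1 → 1 - u ∈ Set.Icc (0 : ℝ) 1 := fun hu =>
    ⟨by linarith [hu.2], by linarith [hu.1]⟩
  rcases hopp with ⟨hg, hh'⟩ | ⟨hg, hh'⟩
  · obtain ⟨mg, hmg, hgloc⟩ := skewed g hg
    obtain ⟨mh, hmh, hhloc⟩ := balanced h hh'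
    exact ⟨mg, hmg, hh.le_of_mem_uIcc_argmax hmh hord hmg.1
        (mem_uIcc_of_weaklySkewed_of_weaklyBalanced hgloc hhloc),
      hh.le_of_mem_uIcc_argmax hmh hord (hcompl hmg.1)
        (mem_uIcc_of_weaklySkewed_of_weaklyBalanced (hflip _ hgloc) hhloc)⟩
  · obtain ⟨mg, hmg, hgloc⟩ := balanced g hg
    obtain ⟨mh, hmh, hhloc⟩ := skewed h hh'
    have hgloc' : σ ≤ 1 - mg ∧ 1 - mg ≤ 1 - σ := ⟨by linarith, by linarith⟩
    exact ⟨mg, hmg, hh.le_of_mem_uIcc_argmax hmh hord hmg.1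
        (by simpa only [Set.uIcc_comm] using
          mem_uIcc_of_weaklySkewed_of_weaklyBalanced hhloc hgloc),
      hh.le_of_mem_uIcc_argmax hmh hord (hcompl hmg.1)
        (by simpa only [Set.uIcc_comm] using
          mem_uIcc_of_weaklySkewed_of_weaklyBalanced hhloc hgloc')⟩

end type

section channel

variable {Y Z : Type*} [Fintype Y] [Fintype Z] {n : ℕ}

lemma IsPMF.le_one {α : Type*} [Fintype α] {p : α → ℝ} (hp : IsPMF p) (x : α) : p x ≤ 1 :=
  hp.2 ▸ Finset.single_le_sum (fun y _ => hp.1 y) (mem_univ x)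

lemma MinTransPair.le_one {P : Bool → Y → ℝ} {Q : Bool → Z → ℝ} {pmin : ℝ}
    (hP : IsChannel P) (hQ : IsChannel Q) (h : MinTransPair P Q pmin) : pmin ≤ 1 := by
  rcases h.2.1 with ⟨b, y, rfl⟩ | ⟨b, z, rfl⟩
  · exact (hP b).le_one y
  · exact (hQ b).le_one z

lemma abs_log_sub_log_le {p x y : ℝ} (hp : 0 < p) (hx : p ≤ x) (hx1 : x ≤ 1) (hy : p ≤ y)
    (hy1 : y ≤ 1) : |Real.log x - Real.log y| ≤ Real.log (1 / p) := by
  have := Real.log_le_log hp hx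
  have := Real.log_le_log hp hy
  have := Real.log_nonpos (hp.le.trans hx) hx1
  have := Real.log_nonpos (hp.le.trans hy) hy1
  rw [one_div, Real.log_inv, abs_le]
  constructor <;> linarith

lemma IsChannel.sum_prodDist {X : Type*} {P : X → Y → ℝ} (hP : IsChannel P) (w : Fin n → X) :
    ∑ y, prodDist P w y = 1 := by
  simp only [prodDist, ← Fintype.prod_sum, (hP _).2, Finset.prod_const_one]

lemma errProb_eq_sum_mul_decProb (P : Bool → Y → ℝ) (Q : Bool → Z → ℝ)
    (π : DetProtocol Y Z n) (b : Bool) :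
    errProb P Q π b = ∑ y, prodDist P (π.x b) y * decProb Q π.dec (!b) (π.W y) := by
  simp only [errProb, decProb, Finset.mul_sum, mul_assoc]

lemma le_errProb {P : Bool → Y → ℝ} (hP : IsChannel P) (Q : Bool → Z → ℝ)
    (π : DetProtocol Y Z n) (b : Bool) {c : ℝ}
    (hc : ∀ y, c ≤ decProb Q π.dec (!b) (π.W y)) : c ≤ errProb P Q π b := by
  rw [errProb_eq_sum_mul_decProb]
  calc c = ∑ y, prodDist P (π.x b) y * c := by rw [← Finset.sum_mul, hP.sum_prodDist, one_mul]
    _ ≤ _ := Finset.sum_le_sum fun y _ => mul_le_mul_of_nonneg_left (hc y)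
        (Finset.prod_nonneg fun i _ => (hP _).1 _)

lemma sum_min_le_decProb_add (Q : Bool → Z → ℝ) (dec : (Fin n → Z) → Bool)
    (w w' : Fin n → Bool) :
    ∑ z, min (prodDist Q w z) (prodDist Q w' z) ≤ decProb Q dec true w + decProb Q dec false w' := by
  rw [decProb, decProb, ← Finset.sum_add_distrib]
  refine Finset.sum_le_sum fun z _ => ?_
  cases dec z <;> simp

variable {Q : Bool → Z → ℝ}

lemma cherSum_prodDist_not_le (hQ : IsChannel Q) (w₀ w : Fin n → Bool) {s : ℝ}
    (hs : s ∈ Set.Icc (0 : ℝ) 1) :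
    cherSum (prodDist Q fun i => !(w i)) (prodDist Q w) s ≤
      cherSum (prodDist Q w₀) (prodDist Q w) s := by
  have hQnn : ∀ b z, 0 ≤ Q b z := fun b => (hQ b).1
  unfold prodDist
  rw [cherSum_pi (fun i => hQnn _) (fun i => hQnn _), cherSum_pi (fun i => hQnn _) (fun i => hQnn _)]
  refine Finset.prod_le_prod (fun i _ => cherSum_nonneg (hQnn _) (hQnn _) s) fun i _ => ?_
  by_cases h : w₀ i = w i
  · rw [h, cherSum_self (hQ _)]
    exact cherSum_le_one (hQ _) (hQ _) hs
  · rw [Bool.eq_not_iff.2 h]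

lemma cherSum_prodDist_pos (hQ : IsChannel Q) (hQsupp : CommonSupport (Q false) (Q true))
    (w w' : Fin n → Bool) (s : ℝ) : 0 < cherSum (prodDist Q w) (prodDist Q w') s := by
  obtain ⟨x, hx₀, hx₁⟩ := hQsupp
  have hQx : ∀ b, Q b x ≠ 0 := Bool.forall_bool.2 ⟨hx₀, hx₁⟩
  unfold prodDist
  rw [cherSum_pi (fun i => (hQ _).1) (fun i => (hQ _).1)]
  exact Finset.prod_pos fun i _ => cherSum_pos (hQ _).1 (hQ _).1 ⟨x, hQx _, hQx _⟩ s

theorem exists_half_mul_exp_neg_mul_cherSum_prodDist_le_sum_min (hQ : IsChannel Q)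
    (hQsupp : CommonSupport (Q false) (Q true)) {pmin : ℝ} (hpmin : 0 < pmin) (hpmin1 : pmin ≤ 1)
    (hmin : ∀ b z, Q b z ≠ 0 → pmin ≤ Q b z) (w w' : Fin n → Bool) :
    ∃ s ∈ Set.Icc (0 : ℝ) 1,
      1 / 2 * Real.exp (-(Real.sqrt (2 * n) * Real.log (1 / pmin))) *
          cherSum (prodDist Q w) (prodDist Q w') s ≤
        ∑ z, min (prodDist Q w z) (prodDist Q w' z) := by
  obtain ⟨x, hx₀, hx₁⟩ := hQsupp
  have hQx : ∀ b, Q b x ≠ 0 := Bool.forall_bool.2 ⟨hx₀, hx₁⟩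
  unfold prodDist
  simpa only [Fintype.card_fin] using exists_half_mul_exp_neg_mul_cherSum_pi_le_sum_min
    (a := fun i => Q (w i)) (b := fun i => Q (w' i)) (fun i => (hQ _).1) (fun i => (hQ _).1)
    (fun i => ⟨x, hQx _, hQx _⟩) (Real.log_nonneg (one_le_one_div hpmin hpmin1))
    fun i ζ h h' => abs_log_sub_log_le hpmin (hmin _ _ h) ((hQ _).le_one ζ) (hmin _ _ h')
      ((hQ _).le_one ζ)

lemma dC_prodDist_not (hQ : IsChannel Q) (hQsupp : CommonSupport (Q false) (Q true))
    (w : Fin n → Bool) (s : ℝ) :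
    dC (prodDist Q fun i => !(w i)) (prodDist Q w) s =
      ∑ i, if w i then dC (Q false) (Q true) s else dC (Q false) (Q true) (1 - s) := by
  obtain ⟨x, hx₀, hx₁⟩ := hQsupp
  have hQx : ∀ b, Q b x ≠ 0 := Bool.forall_bool.2 ⟨hx₀, hx₁⟩
  unfold prodDist
  rw [dC_pi (fun i => (hQ _).1) (fun i => (hQ _).1)
    fun i => ⟨x, hQx _, hQx _⟩]
  refine Finset.sum_congr rfl fun i _ => ?_
  cases w i
  · simp [dC_comm (Q true)]
  · simp

end channel

lemma dC_prodDist_not_le {Z : Type*} [Fintype Z] {Q : Bool → Z → ℝ} (hQ : IsChannel Q)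
    (hQsupp : CommonSupport (Q false) (Q true)) {σ : ℝ} (hσ : σ ∈ Set.Icc (0 : ℝ) (1 / 2))
    (hord : dC (Q false) (Q true) (1 - σ) ≤ dC (Q false) (Q true) σ)
    (hconc : ConcaveOn ℝ (Set.Icc (0 : ℝ) 1) (fun s => dC (Q false) (Q true) s))
    {n : ℕ} {w : Fin n → Bool}
    (hopp : WeaklyOppositeType σ (fun s => dC (prodDist Q (fun i => !(w i))) (prodDist Q w) s)
      (fun s => dC (Q false) (Q true) s))
    {s : ℝ} (hs : s ∈ Set.Icc (0 : ℝ) 1) :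
    dC (prodDist Q fun i => !(w i)) (prodDist Q w) s ≤ n * dC (Q false) (Q true) σ := by
  obtain ⟨mg, hmg, hle, hle'⟩ := hopp.exists_uniqueArgmax_le hconc hσ hord
  calc dC (prodDist Q fun i => !(w i)) (prodDist Q w) s
      ≤ dC (prodDist Q fun i => !(w i)) (prodDist Q w) mg := hmg.isMaxOn hs
    _ = ∑ i, if w i then dC (Q false) (Q true) mg else dC (Q false) (Q true) (1 - mg) :=
        dC_prodDist_not hQ hQsupp w mg
    _ ≤ ∑ _i : Fin n, dC (Q false) (Q true) σ :=
        Finset.sum_le_sum fun i _ => by split_ifs <;> assumption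
    _ = n * dC (Q false) (Q true) σ := by simp

lemma neg_log_le_of_half_mul_exp_neg_mul_exp_neg_le {A δ E : ℝ}
    (h : 1 / 2 * Real.exp (-δ) * Real.exp (-A) ≤ E) : -Real.log E ≤ A + δ + Real.log 4 := by
  have hexp : Real.exp (-(A + δ + Real.log 2)) = 1 / 2 * Real.exp (-δ) * Real.exp (-A) := by
    rw [neg_add, neg_add, Real.exp_add, Real.exp_add, Real.exp_neg (Real.log 2),
      Real.exp_log two_pos]
    ring
  rw [← hexp] at h
  have hlog := (Real.le_log_iff_exp_le ((Real.exp_pos _).trans_le h)).2 h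
  have hlog24 : Real.log 2 ≤ Real.log 4 := Real.log_le_log two_pos (by norm_num)
  linarith

theorem opp_type_Q_bound_general {Y Z : Type*} [Fintype Y] [Fintype Z]
    (P : Bool → Y → ℝ) (Q : Bool → Z → ℝ)
    (hP : IsChannel P) (hQ : IsChannel Q)
    (hQsupp : CommonSupport (Q false) (Q true))
    (pmin : ℝ) (hpmin : MinTransPair P Q pmin)
    (sStar : ℝ) (hsStar : sStar ∈ Set.Icc (0 : ℝ) (1 / 2))
    (hQord : dC (Q false) (Q true) (1 - sStar) ≤ dC (Q false) (Q true) sStar)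
    {n : ℕ} (π : DetProtocol Y Z n)
    (w1 : Fin n → Bool)
    (hw1 : ∀ w : Fin n → Bool, decProb Q π.dec false w1 ≤ decProb Q π.dec false w)
    (hhcc : ConcaveOn ℝ (Set.Icc (0 : ℝ) 1) (fun s => dC (Q false) (Q true) s))
    (hopp : WeaklyOppositeType sStar
      (fun s => dC (prodDist Q (fun i => !(w1 i))) (prodDist Q w1) s)
      (fun s => dC (Q false) (Q true) s)) :
    - Real.log (errProb P Q π false + errProb P Q π true) ≤
      n * dC (Q false) (Q true) sStar +
        Real.sqrt (2 * n) * Real.log (1 / pmin) + Real.log 4 := by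
  obtain ⟨w₀, -, hw₀⟩ := Finset.exists_min_image univ (decProb Q π.dec true) univ_nonempty
  obtain ⟨s, hs, hoverlap⟩ := exists_half_mul_exp_neg_mul_cherSum_prodDist_le_sum_min hQ hQsupp
    hpmin.1 (hpmin.le_one hP hQ) hpmin.2.2.2 w₀ w1
  have hcompl := (dC_le_iff (cherSum_prodDist_pos hQ hQsupp _ _ s)).1
    (dC_prodDist_not_le hQ hQsupp hsStar hQord hhcc hopp hs)
  have herr := (sum_min_le_decProb_add Q π.dec w₀ w1).trans
    (add_le_add (le_errProb hP Q π false fun y => hw₀ _ (mem_univ _))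
      (le_errProb hP Q π true fun y => hw1 _))
  refine neg_log_le_of_half_mul_exp_neg_mul_exp_neg_le (le_trans ?_ (hoverlap.trans herr))
  gcongr
  exact hcompl.trans (cherSum_prodDist_not_le hQ w₀ w1 hs)

/-- Lemma 12 of the paper. -/
theorem opp_type_Q_bound {Y Z : Type*} [Fintype Y] [Fintype Z]
    (P : Bool → Y → ℝ) (Q : Bool → Z → ℝ)
    (hP : IsChannel P) (hQ : IsChannel Q)
    (hPsupp : CommonSupport (P false) (P true))
    (hQsupp : CommonSupport (Q false) (Q true))
    (pmin : ℝ) (hpmin : MinTransPair P Q pmin)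
    (sStar : ℝ) (hsStar : sStar ∈ Set.Icc (0 : ℝ) (1 / 2))
    (hmax : ∀ s ∈ Set.Icc (0 : ℝ) 1, Efun P Q s ≤ Efun P Q sStar)
    (hPord : dC (P false) (P true) (1 - sStar) ≤ dC (P false) (P true) sStar)
    (hQord : dC (Q false) (Q true) (1 - sStar) ≤ dC (Q false) (Q true) sStar)
    {n : ℕ} (π : DetProtocol Y Z n)
    (w1 : Fin n → Bool)
    (hw1 : ∀ w : Fin n → Bool, decProb Q π.dec false w1 ≤ decProb Q π.dec false w)
    (hgnc : NonConstantOn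
      (fun s => dC (prodDist Q (fun i => !(w1 i))) (prodDist Q w1) s))
    (hhnc : NonConstantOn (fun s => dC (Q false) (Q true) s))
    (hgcc : ConcaveOn ℝ (Set.Icc (0 : ℝ) 1)
      (fun s => dC (prodDist Q (fun i => !(w1 i))) (prodDist Q w1) s))
    (hhcc : ConcaveOn ℝ (Set.Icc (0 : ℝ) 1) (fun s => dC (Q false) (Q true) s))
    (hopp : WeaklyOppositeType sStar
      (fun s => dC (prodDist Q (fun i => !(w1 i))) (prodDist Q w1) s)
      (fun s => dC (Q false) (Q true) s)) :
    - Real.log (errProb P Q π false + errProb P Q π true) ≤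
      n * dC (Q false) (Q true) sStar +
        Real.sqrt (2 * n) * Real.log (1 / pmin) + Real.log 4 :=
  opp_type_Q_bound_general P Q hP hQ hQsupp pmin hpmin sStar hsStar hQord π w1 hw1 hhcc hopp

end
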